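/- There is no finitary strongly complete and sound proof system for HXPath= over the class of tree models: any consequence relation ⊢ that is finitary (Γ ⊢ φ iff some finite Γ' ⊆ Γ has Γ' ⊢ φ), sound (Γ ⊢ φ implies Γ ⊨_tree φ) and strongly complete (Γ ⊨_tree φ implies Γ ⊢ φ) leads to a contradiction. -/

import Mathlib

mutual
inductive PExp (P N M E : Type) : Type
  | mod : M → PExp P N M E
  | at_ : N → PExp P N M E
  | test : NExp P N M E → PExp P N M E
  | comp : PExp P N M E → PExp P N M E → PExp P N M E
inductive NExp (P N M E : Type) : Type
  | prop : P → NExp P N M E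
  | nom : N → NExp P N M E
  | neg : NExp P N M E → NExp P N M E
  | conj : NExp P N M E → NExp P N M E → NExp P N M E
  | cmpEq : E → PExp P N M E → PExp P N M E → NExp P N M E
  | cmpNeq : E → PExp P N M E → PExp P N M E → NExp P N M E
end

/-- An abstract hybrid data model (the requirement that each `sim e` is an
equivalence relation is stated as a separate hypothesis where needed). -/
structure Model (P N M E : Type) where
  W : Type
  sim : E → W → W → Prop
  R : M → W → W → Prop
  V : W → P → Prop
  nom : N → W

mutual
def psat {P N M E : Type} (𝔐 : Model P N M E) : PExp P N M E → 𝔐.W → 𝔐.W → Prop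
  | .mod a, m, n => 𝔐.R a m n
  | .at_ i, _, n => 𝔐.nom i = n
  | .test φ, m, n => m = n ∧ nsat 𝔐 φ m
  | .comp α β, m, n => ∃ l, psat 𝔐 α m l ∧ psat 𝔐 β l n
def nsat {P N M E : Type} (𝔐 : Model P N M E) : NExp P N M E → 𝔐.W → Prop
  | .prop p, m => 𝔐.V m p
  | .nom i, m => 𝔐.nom i = m
  | .neg φ, m => ¬ nsat 𝔐 φ m
  | .conj φ ψ, m => nsat 𝔐 φ m ∧ nsat 𝔐 ψ m
  | .cmpEq e α β, m => ∃ n l, psat 𝔐 α m n ∧ psat 𝔐 β m l ∧ 𝔐.sim e n l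
  | .cmpNeq e α β, m => ∃ n l, psat 𝔐 α m n ∧ psat 𝔐 β m l ∧ ¬ 𝔐.sim e n l
end

variable {P N M E : Type}

/-- `⊤` defined from a given node expression: `¬(φ ∧ ¬φ)`. -/
def NExp.top (φ : NExp P N M E) : NExp P N M E := .neg (.conj φ (.neg φ))
/-- `ε := [⊤]`. -/
def PExp.eps (φ : NExp P N M E) : PExp P N M E := .test (NExp.top φ)
/-- `⟨α⟩φ := ⟨α[φ] =_e α[φ]⟩`. -/
def NExp.dia (e : E) (α : PExp P N M E) (φ : NExp P N M E) : NExp P N M E :=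
  .cmpEq e (α.comp (.test φ)) (α.comp (.test φ))
/-- `[α]φ := ¬⟨α⟩¬φ`. -/
def NExp.box (e : E) (α : PExp P N M E) (φ : NExp P N M E) : NExp P N M E :=
  .neg (NExp.dia e α (.neg φ))
/-- `@_i φ := ⟨@_i⟩φ`. -/
def NExp.atf (e : E) (i : N) (φ : NExp P N M E) : NExp P N M E := NExp.dia e (.at_ i) φ
def NExp.impl (φ ψ : NExp P N M E) : NExp P N M E := .neg (.conj φ (.neg ψ))
def NExp.iffN (φ ψ : NExp P N M E) : NExp P N M E := .conj (φ.impl ψ) (ψ.impl φ)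

/-- A (pointed-free) tree model: mono-modal abstract hybrid data model whose
accessibility relation forms a tree (unique root without predecessors, every node
reachable from the root, unique predecessors, no cycles). -/
def IsTree (𝔐 : Model P N Unit Unit) : Prop :=
  (∀ e, Equivalence (𝔐.sim e)) ∧
  ∃ r : 𝔐.W,
    (∀ x, ¬ 𝔐.R () x r) ∧
    (∀ x, (∀ y, ¬ 𝔐.R () y x) → x = r) ∧
    (∀ n, Relation.ReflTransGen (𝔐.R ()) r n) ∧
    (∀ n l l', 𝔐.R () l n → 𝔐.R () l' n → l = l') ∧
    (∀ n, ¬ Relation.TransGen (𝔐.R ()) n n)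

/-- Local semantic consequence over the class of tree models. -/
def TreeConseq (Γ : Set (NExp ℕ ℕ Unit Unit)) (φ : NExp ℕ ℕ Unit Unit) : Prop :=
  ∀ (𝔐 : Model ℕ ℕ Unit Unit) (m : 𝔐.W), IsTree 𝔐 →
    (∀ ψ ∈ Γ, nsat 𝔐 ψ m) → nsat 𝔐 φ m

/-! In a tree the point named `0` has some finite depth `k`, so it cannot satisfy `Lin (k + 1)`,
which asks for a path of length `k + 1` into it: the set of all `Lin n` is unsatisfiable over
trees. Each finite subset, however, holds on the successor chain `ℕ` once `0` names a point deep
enough. A finitary, sound and strongly complete consequence relation would restore compactness: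
an unsatisfiable set entails `⊥`, hence so does a finite subset, which is then unsatisfiable. -/

def relPow {α : Type*} (R : α → α → Prop) : ℕ → α → α → Prop
  | 0 => Eq
  | n + 1 => Relation.Comp (relPow R n) R

theorem Relation.ReflTransGen.exists_relPow {α : Type*} {R : α → α → Prop} {a b : α}
    (h : Relation.ReflTransGen R a b) : ∃ n, relPow R n a b := by
  induction h with
  | refl => exact ⟨0, rfl⟩
  | tail _ hbc ih =>
    obtain ⟨n, hn⟩ := ih
    exact ⟨n + 1, _, hn, hbc⟩

theorem relPow_le_of_root {α : Type*} {R : α → α → Prop} {r : α} (hroot : ∀ x, ¬ R x r)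
    (huniq : ∀ n l l', R l n → R l' n → l = l') :
    ∀ {n k : ℕ} {x m : α}, relPow R n x m → relPow R k r m → n ≤ k
  -- walking back from `m`, unique predecessors keep the two paths together, and `r` has none
  | 0, _, _, _, _, _ => Nat.zero_le _
  | _ + 1, 0, _, _, ⟨y, _, hym⟩, rfl => absurd hym (hroot y)
  | _ + 1, _ + 1, _, _, ⟨y, hy, hym⟩, ⟨y', hy', hy'm⟩ => by
    cases huniq _ _ _ hym hy'm
    exact Nat.succ_le_succ (relPow_le_of_root hroot huniq hy hy')

theorem relPow_add_one_eq_iff {n x y : ℕ} :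
    relPow (fun a b : ℕ => a + 1 = b) n x y ↔ x + n = y := by
  induction n generalizing y with
  | zero => rfl
  | succ n ih =>
    constructor
    · rintro ⟨z, hz, rfl⟩
      rw [← ih.1 hz]
      rfl
    · rintro rfl
      exact ⟨x + n, ih.2 rfl, rfl⟩

theorem nsat_dia_iff {𝔐 : Model P N M E} {e : E} (hrefl : ∀ x, 𝔐.sim e x x)
    {α : PExp P N M E} {φ : NExp P N M E} {m : 𝔐.W} :
    nsat 𝔐 (NExp.dia e α φ) m ↔ ∃ n, psat 𝔐 α m n ∧ nsat 𝔐 φ n := by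
  simp only [NExp.dia, nsat, psat]
  constructor
  · rintro ⟨n, -, ⟨l, hl, rfl, hφ⟩, -⟩
    exact ⟨l, hl, hφ⟩
  · rintro ⟨n, hn, hφ⟩
    exact ⟨n, n, ⟨n, hn, rfl, hφ⟩, ⟨n, hn, rfl, hφ⟩, hrefl n⟩

def PExp.modPow : ℕ → PExp ℕ ℕ Unit Unit
  | 0 => PExp.eps (.prop 0)
  | n + 1 => .comp (modPow n) (.mod ())

theorem psat_modPow (𝔐 : Model ℕ ℕ Unit Unit) :
    ∀ n, psat 𝔐 (PExp.modPow n) = relPow (𝔐.R ()) n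
  | 0 => by
    ext x y
    simp only [PExp.modPow, PExp.eps, NExp.top, psat, nsat, relPow]
    tauto
  | n + 1 => by
    ext x y
    simp only [PExp.modPow, psat, relPow, psat_modPow 𝔐 n, Relation.Comp]

def Lin (n : ℕ) : NExp ℕ ℕ Unit Unit :=
  NExp.dia () ((PExp.at_ (n + 1)).comp (PExp.modPow n)) (.nom 0)

theorem Lin_injective : Function.Injective Lin := by
  intro a b h
  simp only [Lin, NExp.dia, NExp.cmpEq.injEq, PExp.comp.injEq, PExp.at_.injEq] at h
  omega

theorem nsat_Lin_iff {𝔐 : Model ℕ ℕ Unit Unit} (hrefl : ∀ x, 𝔐.sim () x x) {n : ℕ} {m : 𝔐.W} :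
    nsat 𝔐 (Lin n) m ↔ relPow (𝔐.R ()) n (𝔐.nom (n + 1)) (𝔐.nom 0) := by
  simp only [Lin, nsat_dia_iff hrefl, psat, psat_modPow, nsat]
  constructor
  · rintro ⟨_, ⟨_, rfl, h⟩, rfl⟩
    exact h
  · intro h
    exact ⟨_, ⟨_, rfl, h⟩, rfl⟩

def TreeSatisfiable (Γ : Set (NExp ℕ ℕ Unit Unit)) : Prop :=
  ∃ (𝔐 : Model ℕ ℕ Unit Unit) (m : 𝔐.W), IsTree 𝔐 ∧ ∀ ψ ∈ Γ, nsat 𝔐 ψ m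

def falsum : NExp ℕ ℕ Unit Unit := .conj (.prop 0) (.neg (.prop 0))

theorem treeConseq_falsum_iff {Γ : Set (NExp ℕ ℕ Unit Unit)} :
    TreeConseq Γ falsum ↔ ¬ TreeSatisfiable Γ := by
  simp only [TreeConseq, TreeSatisfiable, falsum, nsat, and_not_self, imp_false, not_exists,
    not_and]

theorem treeSatisfiable_of_finitary_sound_complete
    (pr : Set (NExp ℕ ℕ Unit Unit) → NExp ℕ ℕ Unit Unit → Prop)
    (hfin : ∀ Γ φ, pr Γ φ → ∃ Γ' ⊆ Γ, Γ'.Finite ∧ pr Γ' φ)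
    (hsound : ∀ Γ φ, pr Γ φ → TreeConseq Γ φ)
    (hcomplete : ∀ Γ φ, TreeConseq Γ φ → pr Γ φ) {Γ : Set (NExp ℕ ℕ Unit Unit)}
    (h : ∀ Γ' ⊆ Γ, Γ'.Finite → TreeSatisfiable Γ') : TreeSatisfiable Γ := by
  by_contra hΓ
  obtain ⟨Γ', hsub, hfinite, hpr⟩ := hfin _ _ (hcomplete _ _ (treeConseq_falsum_iff.2 hΓ))
  exact treeConseq_falsum_iff.1 (hsound _ _ hpr) (h Γ' hsub hfinite)

theorem not_treeSatisfiable_range_Lin : ¬ TreeSatisfiable (Set.range Lin) := by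
  rintro ⟨𝔐, m, ⟨hsim, r, hroot, -, hreach, huniq, -⟩, hsat⟩
  have hLin (n : ℕ) : relPow (𝔐.R ()) n (𝔐.nom (n + 1)) (𝔐.nom 0) :=
    (nsat_Lin_iff (hsim ()).refl).1 (hsat _ ⟨n, rfl⟩)
  obtain ⟨k, hk⟩ := (hreach (𝔐.nom 0)).exists_relPow
  exact (relPow_le_of_root hroot huniq (hLin (k + 1)) hk).not_gt k.lt_succ_self

/-- The nominal `k + 1` names `d - k`, which reaches `d`, the point named `0`, in exactly `k`
steps whenever `k ≤ d`. -/
def chainModel (d : ℕ) : Model ℕ ℕ Unit Unit where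
  W := ℕ
  sim _ _ _ := True
  R _ a b := a + 1 = b
  V _ _ := True
  nom
    | 0 => d
    | k + 1 => d - k

theorem chainModel_isTree (d : ℕ) : IsTree (chainModel d) := by
  refine ⟨fun _ => ⟨fun _ => trivial, fun _ => trivial, fun _ _ => trivial⟩, (0 : ℕ),
    fun x => (x.succ_ne_zero ·), ?_, ?_, ?_, ?_⟩
  · rintro (_ | x) h
    · rfl
    · exact absurd rfl (h x)
  · exact fun n : ℕ => reflTransGen_of_succ_of_le (fun a b : ℕ => a + 1 = b) (fun _ _ => rfl)
      n.zero_le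
  · rintro n l l' rfl h
    exact (Nat.succ_injective h).symm
  · intro n h
    have : Relation.TransGen (fun a b : ℕ => a < b) n n :=
      Relation.TransGen.mono (fun a _ h => h ▸ a.lt_add_one) n n h
    exact (Relation.transGen_eq_self (r := fun a b : ℕ => a < b) ▸ this).false

theorem nsat_chainModel_Lin {d n : ℕ} (hn : n ≤ d) (m : ℕ) : nsat (chainModel d) (Lin n) m :=
  (nsat_Lin_iff fun _ => trivial).2 (relPow_add_one_eq_iff.2 (Nat.sub_add_cancel hn))

theorem treeSatisfiable_of_subset_range_Lin {Γ : Set (NExp ℕ ℕ Unit Unit)}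
    (hsub : Γ ⊆ Set.range Lin) (hfinite : Γ.Finite) : TreeSatisfiable Γ := by
  obtain ⟨d, hd⟩ := (hfinite.preimage Lin_injective.injOn).bddAbove
  refine ⟨chainModel d, (0 : ℕ), chainModel_isTree d, fun ψ hψ => ?_⟩
  obtain ⟨n, rfl⟩ := hsub hψ
  exact nsat_chainModel_Lin (hd hψ) _

/-- There is no finitary, sound and strongly complete consequence relation for
HXPath= over the class of tree models. -/
theorem no_finitary_strongly_complete_over_trees
    (pr : Set (NExp ℕ ℕ Unit Unit) → NExp ℕ ℕ Unit Unit → Prop)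
    (hfin : ∀ Γ φ, pr Γ φ ↔ ∃ Γ' ⊆ Γ, Γ'.Finite ∧ pr Γ' φ)
    (hsound : ∀ Γ φ, pr Γ φ → TreeConseq Γ φ)
    (hcomplete : ∀ Γ φ, TreeConseq Γ φ → pr Γ φ) :
    False :=
  not_treeSatisfiable_range_Lin <|
    treeSatisfiable_of_finitary_sound_complete pr (fun Γ φ => (hfin Γ φ).1) hsound hcomplete
      fun _ => treeSatisfiable_of_subset_range_Lin
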